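/- Let λ ∈ ℝ^d be a probability vector and |ψ⟩ = Σ_{j=1}^d √λ_j |j⟩⊗|j⟩ ∈ ℂ^d⊗ℂ^d. Then the cross-covariance block X_ψ of the covariance matrix of |ψ⟩⟨ψ| in the canonical operator bases satisfies tr|X_ψ| = (Σ_j √λ_j)² − Σ_j λ_j². In particular, if λ has at most r nonzero entries (i.e. |ψ⟩ has Schmidt rank ≤ r), then tr|X_ψ| ≤ r − tr(ρ_a²), where ρ_a = tr_b |ψ⟩⟨ψ| is the reduced state, with tr(ρ_a²) = Σ_j λ_j². -/

import Mathlib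

open Matrix Kronecker BigOperators Finset
open scoped ComplexOrder

/-- Expectation value ⟨A⟩_ρ = Re tr(ρ A). -/
noncomputable def expval {n : Type*} [Fintype n] (ρ A : Matrix n n ℂ) : ℝ :=
  ((ρ * A).trace).re

/-- A density matrix: positive semidefinite with unit trace. -/
def IsDensityMatrix {n : Type*} [Fintype n] (ρ : Matrix n n ℂ) : Prop :=
  ρ.PosSemidef ∧ ρ.trace = 1

/-- The projector |v⟩⟨v| associated to a vector. -/
noncomputable def pureState {n : Type*} (v : n → ℂ) : Matrix n n ℂ :=
  Matrix.vecMulVec v (star v)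

/-- A normalized vector. -/
def IsUnitVec {n : Type*} [Fintype n] (v : n → ℂ) : Prop :=
  ∑ i, Complex.normSq (v i) = 1

/-- The canonical Hermitian operator basis of ℂ^d, indexed by pairs (j,k):
diagonal operators for j = k, real operators for j < k, imaginary operators for j > k. -/
noncomputable def canonG (d : ℕ) : Fin d × Fin d → Matrix (Fin d) (Fin d) ℂ := fun μ =>
  if μ.1 = μ.2 then Matrix.single μ.1 μ.1 1
  else if μ.1 < μ.2 then
    ((Real.sqrt 2 : ℂ))⁻¹ • (Matrix.single μ.1 μ.2 1 + Matrix.single μ.2 μ.1 1)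
  else
    (Complex.I * ((Real.sqrt 2 : ℂ))⁻¹) •
      (Matrix.single μ.2 μ.1 1 - Matrix.single μ.1 μ.2 1)

/-- Covariance matrix of a family of observables w.r.t. a state ρ. -/
noncomputable def covMat {n K : Type*} [Fintype n] (ρ : Matrix n n ℂ)
    (M : K → Matrix n n ℂ) : Matrix K K ℝ :=
  Matrix.of fun j k =>
    (1/2 : ℝ) * expval ρ (M j * M k + M k * M j) - expval ρ (M j) * expval ρ (M k)

/-- The local observables (g_μ ⊗ 1, 1 ⊗ g_ν) on the bipartite space. -/
noncomputable def bipObs (d : ℕ) :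
    (Fin d × Fin d) ⊕ (Fin d × Fin d) → Matrix (Fin d × Fin d) (Fin d × Fin d) ℂ :=
  Sum.elim (fun μ => canonG d μ ⊗ₖ (1 : Matrix (Fin d) (Fin d) ℂ))
           (fun ν => (1 : Matrix (Fin d) (Fin d) ℂ) ⊗ₖ canonG d ν)

/-- The full covariance matrix Γ_ρ of the canonical bipartite observables. -/
noncomputable def GammaCM (d : ℕ) (ρ : Matrix (Fin d × Fin d) (Fin d × Fin d) ℂ) :
    Matrix ((Fin d × Fin d) ⊕ (Fin d × Fin d)) ((Fin d × Fin d) ⊕ (Fin d × Fin d)) ℝ :=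
  covMat ρ (bipObs d)

/-- The cross-covariance block X_ρ. -/
noncomputable def crossCov (d : ℕ) (ρ : Matrix (Fin d × Fin d) (Fin d × Fin d) ℂ) :
    Matrix (Fin d × Fin d) (Fin d × Fin d) ℝ :=
  Matrix.of fun μ ν =>
    expval ρ (canonG d μ ⊗ₖ canonG d ν)
      - expval ρ (canonG d μ ⊗ₖ 1) * expval ρ ((1 : Matrix (Fin d) (Fin d) ℂ) ⊗ₖ canonG d ν)

/-- Reduced state on the first subsystem. -/
noncomputable def redA (d : ℕ) (ρ : Matrix (Fin d × Fin d) (Fin d × Fin d) ℂ) :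
    Matrix (Fin d) (Fin d) ℂ :=
  Matrix.of fun i j => ∑ k, ρ (i, k) (j, k)

/-- Reduced state on the second subsystem. -/
noncomputable def redB (d : ℕ) (ρ : Matrix (Fin d × Fin d) (Fin d × Fin d) ℂ) :
    Matrix (Fin d) (Fin d) ℂ :=
  Matrix.of fun i j => ∑ k, ρ (k, i) (k, j)

/-- Purity tr(σ²) (real part). -/
noncomputable def purity {n : Type*} [Fintype n] (σ : Matrix n n ℂ) : ℝ :=
  ((σ * σ).trace).re

/-- The positive semidefinite square root of a positive semidefinite matrix
(the definition Mathlib had under this name, since removed). -/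
noncomputable def Matrix.PosSemidef.sqrt {n 𝕜 : Type*} [Fintype n] [DecidableEq n] [RCLike 𝕜]
    {A : Matrix n n 𝕜} (hA : A.PosSemidef) : Matrix n n 𝕜 :=
  hA.1.eigenvectorUnitary.1 * Matrix.diagonal ((↑) ∘ (√·) ∘ hA.1.eigenvalues) *
    (star hA.1.eigenvectorUnitary : Matrix n n 𝕜)

/-- Trace norm of a real matrix: sum of its singular values, i.e. tr √(XᵀX). -/
noncomputable def traceNorm {n : Type*} [Fintype n] [DecidableEq n] (X : Matrix n n ℝ) : ℝ :=
  (Matrix.posSemidef_conjTranspose_mul_self X).sqrt.trace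

/-- Schmidt rank of a pure state vector is the rank of its coefficient matrix. -/
def SchmidtRankLE (d r : ℕ) (v : Fin d × Fin d → ℂ) : Prop :=
  (Matrix.of fun j k : Fin d => v (j, k)).rank ≤ r

/-- Schmidt number at most r. -/
def SchmidtNumberLE (d r : ℕ) (ρ : Matrix (Fin d × Fin d) (Fin d × Fin d) ℂ) : Prop :=
  ∃ (n : ℕ) (p : Fin n → ℝ) (ψ : Fin n → (Fin d × Fin d → ℂ)),
    (∀ k, 0 ≤ p k) ∧ (∑ k, p k = 1) ∧ (∀ k, IsUnitVec (ψ k)) ∧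
    (∀ k, SchmidtRankLE d r (ψ k)) ∧
    ρ = ∑ k, (p k : ℂ) • pureState (ψ k)

/-!
For `ψ = ∑ⱼ √λⱼ |jj⟩` one has `⟨ψ| M ⊗ N |ψ⟩ = tr (M S Nᵀ S)` with `S = diag √λ`. Since
`S g_ν S = √λ_c √λ_e • g_ν` for `ν = (c, e)`, `g_νᵀ = ±g_ν`, and the canonical basis is
Hilbert–Schmidt orthonormal, the cross-covariance block factors as `X_ψ = D A` with `D = diag (±1)`
and `A = diag (√λ_c √λ_e) - a aᵀ`, where `a` carries `λ` on the diagonal basis elements. `A` is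
positive semidefinite (on the diagonal elements it is the covariance matrix of the distribution
`λ`), so `X_ψᵀ X_ψ = A²` and `tr |X_ψ| = tr A = (∑ⱼ √λⱼ)² - ∑ⱼ λⱼ²`. The Schmidt-rank bound is then
Cauchy–Schwarz on the support of `λ`.
-/

section TraceNorm

variable {n : Type*} [Fintype n] [DecidableEq n]

theorem traceNorm_eq_trace_of_sq_eq {X S : Matrix n n ℝ} (hS : S.PosSemidef)
    (h : S ^ 2 = Xᴴ * X) : traceNorm X = S.trace := by
  have hA := posSemidef_conjTranspose_mul_self X
  have hsqrt_cfc : hA.sqrt = cfc Real.sqrt (Xᴴ * X) := by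
    rw [hA.1.cfc_eq]
    simp [IsHermitian.cfc, PosSemidef.sqrt, Unitary.conjStarAlgAut_apply]
  have hcfc : cfc Real.sqrt (Xᴴ * X) = S := by
    open scoped MatrixOrder in
    rw [← cfcₙ_eq_cfc, ← CFC.sqrt_eq_real_sqrt _ hA.nonneg]
    open scoped MatrixOrder in
    exact CFC.sqrt_unique (by rw [← h, sq]) hS.nonneg
  rw [traceNorm, hsqrt_cfc, hcfc]

theorem traceNorm_mul_eq_trace_of_posSemidef {U S : Matrix n n ℝ} (hU : Uᴴ * U = 1)
    (hS : S.PosSemidef) : traceNorm (U * S) = S.trace :=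
  traceNorm_eq_trace_of_sq_eq hS <| by
    rw [conjTranspose_mul, Matrix.mul_assoc, ← Matrix.mul_assoc Uᴴ, hU, Matrix.one_mul,
      hS.1.eq, sq]

end TraceNorm

section Covariance

variable {n : Type*} [Fintype n] [DecidableEq n]

theorem posSemidef_diagonal_sub_vecMulVec {w : n → ℝ} (hw : ∀ i, 0 ≤ w i)
    (hsum : ∑ i, w i ≤ 1) : (diagonal w - vecMulVec w w).PosSemidef := by
  refine posSemidef_iff_dotProduct_mulVec.2 ⟨by simp [IsHermitian], fun x => ?_⟩
  have hquad : star x ⬝ᵥ (diagonal w - vecMulVec w w) *ᵥ x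
      = ∑ i, w i * x i ^ 2 - (∑ i, w i * x i) ^ 2 := by
    simp only [star_trivial, sub_mulVec, vecMulVec_mulVec, mulVec_diagonal, dotProduct,
      Pi.sub_apply, Pi.smul_apply, op_smul_eq_mul, mul_sub, Finset.sum_sub_distrib]
    rw [sq, Finset.sum_mul]
    congr 1 <;> exact Finset.sum_congr rfl fun i _ => by ring
  have hcs : (∑ i, w i * x i) ^ 2 ≤ (∑ i, w i) * ∑ i, w i * x i ^ 2 :=
    Finset.sum_sq_le_sum_mul_sum_of_sq_le_mul _ (fun i _ => hw i)
      (fun i _ => mul_nonneg (hw i) (sq_nonneg _)) (fun i _ => le_of_eq (by ring))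
  have hmoment : 0 ≤ ∑ i, w i * x i ^ 2 :=
    Finset.sum_nonneg fun i _ => mul_nonneg (hw i) (sq_nonneg _)
  rw [hquad]
  nlinarith

theorem posSemidef_diagonal_sub_vecMulVec_of_le {w t : n → ℝ} (hw : ∀ i, 0 ≤ w i)
    (hwt : ∀ i, w i ≤ t i) (hsum : ∑ i, w i ≤ 1) :
    (diagonal t - vecMulVec w w).PosSemidef := by
  have hsplit : diagonal t - vecMulVec w w = (diagonal w - vecMulVec w w) + diagonal (t - w) := by
    rw [show diagonal (t - w) = diagonal t - diagonal w from (diagonal_sub t w).symm]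
    abel
  rw [hsplit]
  exact (posSemidef_diagonal_sub_vecMulVec hw hsum).add
    (posSemidef_diagonal_iff.2 fun i => sub_nonneg.2 (hwt i))

end Covariance

theorem sq_sum_sqrt_le_card_mul_sum {ι : Type*} (s : Finset ι) {f : ι → ℝ}
    (hf : ∀ i ∈ s, 0 ≤ f i) : (∑ i ∈ s, √(f i)) ^ 2 ≤ #{i ∈ s | f i ≠ 0} * ∑ i ∈ s, f i := by
  have hsqrt : ∑ i ∈ s, √(f i) = ∑ i ∈ s with f i ≠ 0, √(f i) :=
    (Finset.sum_filter_of_ne (p := fun i => f i ≠ 0)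
      fun i _ h h0 => h (by rw [h0, Real.sqrt_zero])).symm
  have hsq : ∑ i ∈ s, f i = ∑ i ∈ s with f i ≠ 0, √(f i) ^ 2 := by
    rw [← Finset.sum_filter_ne_zero]
    exact Finset.sum_congr rfl fun i hi => (Real.sq_sqrt (hf i (Finset.mem_filter.1 hi).1)).symm
  rw [hsqrt, hsq]
  exact sq_sum_le_card_mul_sum_sq

section DiagEmbed

variable {n : Type*} [DecidableEq n]

def diagEmbed {R : Type*} [Zero R] (f : n → R) : n × n → R :=
  fun p => if p.1 = p.2 then f p.1 else 0

theorem sum_diagEmbed [Fintype n] {M : Type*} [AddCommMonoid M] (f : n → M) :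
    ∑ p, diagEmbed f p = ∑ i, f i := by
  simp [diagEmbed, Fintype.sum_prod_type]

theorem re_diagEmbed_ofReal (f : n → ℝ) (p : n × n) :
    (diagEmbed (fun i => (f i : ℂ)) p).re = diagEmbed f p := by
  unfold diagEmbed
  split_ifs <;> simp

variable [Fintype n]

theorem trace_pureState_diagEmbed_mul_kronecker (s : n → ℂ) (M N : Matrix n n ℂ) :
    (pureState (diagEmbed s) * (M ⊗ₖ N)).trace
      = (M * diagonal s * Nᵀ * diagonal (star s)).trace := by
  have hrhs : (M * diagonal s * Nᵀ * diagonal (star s)).trace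
      = ∑ k, ∑ j, M k j * s j * N k j * star (s k) := by
    simp only [trace, diag_apply, mul_diagonal]
    simp [mul_apply, diagonal_apply, Finset.sum_mul]
  rw [hrhs]
  simp only [trace, diag_apply, mul_apply, pureState, vecMulVec_apply, diagEmbed,
    Fintype.sum_prod_type, kroneckerMap_apply, Pi.star_apply]
  simp only [apply_ite (star : ℂ → ℂ), star_zero, ite_mul, zero_mul, mul_zero, mul_ite,
    Finset.sum_ite_irrel, Finset.sum_const_zero, Finset.sum_ite_eq, Finset.mem_univ, if_true]
  rw [Finset.sum_comm]
  exact Finset.sum_congr rfl fun k _ => Finset.sum_congr rfl fun j _ => by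
    simp only [RCLike.star_def]
    ring

theorem redA_pureState_diagEmbed {d : ℕ} (s : Fin d → ℂ) :
    redA d (pureState (diagEmbed s)) = diagonal s * diagonal (star s) := by
  rw [diagonal_mul_diagonal]
  ext i j
  rcases eq_or_ne i j with rfl | h
  · simp [redA, pureState, diagEmbed, vecMulVec_apply]
  · simp [redA, pureState, diagEmbed, vecMulVec_apply, h, Ne.symm h]

end DiagEmbed

theorem diagonal_mul_single_mul_diagonal {n R : Type*} [Fintype n] [DecidableEq n]
    [CommSemiring R] (s : n → R) (i j : n) (c : R) :
    diagonal s * single i j c * diagonal s = (s i * s j) • single i j c := by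
  ext k l
  simp only [mul_diagonal, diagonal_mul, single_apply, Matrix.smul_apply, smul_eq_mul]
  split_ifs with h
  · simp [h.1, h.2, mul_comm, mul_left_comm]
  · simp

section CanonicalBasis

variable {d : ℕ}

def canonSign (μ : Fin d × Fin d) : ℝ :=
  if μ.2 < μ.1 then -1 else 1

theorem canonSign_mul_self (μ : Fin d × Fin d) : canonSign μ * canonSign μ = 1 := by
  unfold canonSign
  split_ifs <;> norm_num

theorem canonSign_mul_diagEmbed (f : Fin d → ℝ) (μ : Fin d × Fin d) :
    canonSign μ * diagEmbed f μ = diagEmbed f μ := by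
  unfold canonSign diagEmbed
  split_ifs <;> simp_all

theorem canonG_transpose (μ : Fin d × Fin d) :
    (canonG d μ)ᵀ = (canonSign μ : ℂ) • canonG d μ := by
  obtain ⟨a, b⟩ := μ
  rcases lt_trichotomy a b with hab | rfl | hab
  · simp [canonG, canonSign, hab, hab.ne, hab.not_gt, add_comm]
  · simp [canonG, canonSign]
  · simp [canonG, canonSign, hab, hab.ne', hab.not_gt, transpose_sub, ← smul_neg]

theorem diagonal_mul_canonG_mul_diagonal (s : Fin d → ℂ) (μ : Fin d × Fin d) :
    diagonal s * canonG d μ * diagonal s = (s μ.1 * s μ.2) • canonG d μ := by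
  obtain ⟨a, b⟩ := μ
  rcases lt_trichotomy a b with hab | rfl | hab
  · simp [canonG, hab, hab.ne, Matrix.mul_add, Matrix.add_mul, diagonal_mul_single_mul_diagonal,
      smul_add, mul_comm]
  · simp [canonG, diagonal_mul_single_mul_diagonal]
  · simp [canonG, hab.ne', hab.not_gt, Matrix.mul_sub, Matrix.sub_mul,
      diagonal_mul_single_mul_diagonal, smul_sub, mul_comm]

theorem trace_canonG_mul_diagonal (w : Fin d → ℂ) (μ : Fin d × Fin d) :
    (canonG d μ * diagonal w).trace = diagEmbed w μ := by
  obtain ⟨a, b⟩ := μ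
  rcases lt_trichotomy a b with hab | rfl | hab
  · simp [canonG, diagEmbed, hab, hab.ne, Matrix.add_mul, trace_single_mul,
      diagonal_apply_ne _ hab.ne']
  · simp [canonG, diagEmbed, trace_single_mul]
  · simp [canonG, diagEmbed, hab.ne', hab.not_gt, Matrix.sub_mul, trace_single_mul,
      diagonal_apply_ne _ hab.ne]

theorem trace_canonG_mul_canonG (μ ν : Fin d × Fin d) :
    (canonG d μ * canonG d ν).trace = if μ = ν then 1 else 0 := by
  obtain ⟨a, b⟩ := μ
  obtain ⟨c, e⟩ := ν
  have h2 : ((√2 : ℝ) : ℂ)⁻¹ * ((√2 : ℝ) : ℂ)⁻¹ = 2⁻¹ := by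
    rw [← mul_inv, ← Complex.ofReal_mul, Real.mul_self_sqrt zero_le_two]
    norm_num
  unfold canonG
  split_ifs <;>
    simp only [Matrix.add_mul, Matrix.mul_add, Matrix.sub_mul, Matrix.mul_sub, Matrix.smul_mul,
      Matrix.mul_smul, trace_add, trace_sub, trace_smul, trace_single_mul, single_apply] <;>
    split_ifs <;> simp_all [Prod.ext_iff] <;>
    first
    | omega
    | linear_combination 2 * h2
    | linear_combination (-2 * Complex.I ^ 2) * h2 - Complex.I_sq

end CanonicalBasis

section SchmidtState

variable {d : ℕ} {lam : Fin d → ℝ}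

theorem diagonal_sqrt_mul_diagonal_star (hpos : ∀ j, 0 ≤ lam j) :
    diagonal (fun j => (√(lam j) : ℂ)) * diagonal (star fun j => (√(lam j) : ℂ))
      = diagonal (fun j => (lam j : ℂ)) := by
  rw [diagonal_mul_diagonal]
  congr 1
  ext j
  simp [← Complex.ofReal_mul, Real.mul_self_sqrt (hpos j)]

theorem expval_schmidt_kronecker_one (hpos : ∀ j, 0 ≤ lam j) (μ : Fin d × Fin d) :
    expval (pureState (diagEmbed fun j => (√(lam j) : ℂ))) (canonG d μ ⊗ₖ 1)
      = diagEmbed lam μ := by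
  rw [expval, trace_pureState_diagEmbed_mul_kronecker, transpose_one, Matrix.mul_one,
    Matrix.mul_assoc, diagonal_sqrt_mul_diagonal_star hpos, trace_canonG_mul_diagonal,
    re_diagEmbed_ofReal]

theorem expval_schmidt_one_kronecker (hpos : ∀ j, 0 ≤ lam j) (ν : Fin d × Fin d) :
    expval (pureState (diagEmbed fun j => (√(lam j) : ℂ))) (1 ⊗ₖ canonG d ν)
      = diagEmbed lam ν := by
  rw [expval, trace_pureState_diagEmbed_mul_kronecker, Matrix.one_mul, ← trace_transpose,
    transpose_mul, transpose_mul, transpose_transpose, diagonal_transpose, diagonal_transpose,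
    trace_mul_comm, Matrix.mul_assoc, diagonal_sqrt_mul_diagonal_star hpos,
    trace_canonG_mul_diagonal, re_diagEmbed_ofReal]

theorem expval_schmidt_kronecker (μ ν : Fin d × Fin d) :
    expval (pureState (diagEmbed fun j => (√(lam j) : ℂ))) (canonG d μ ⊗ₖ canonG d ν)
      = if μ = ν then canonSign μ * (√(lam μ.1) * √(lam μ.2)) else 0 := by
  have hstar : (star fun j => (√(lam j) : ℂ)) = fun j => (√(lam j) : ℂ) := by
    ext j
    simp
  rw [expval, trace_pureState_diagEmbed_mul_kronecker, hstar, Matrix.mul_assoc, Matrix.mul_assoc,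
    ← Matrix.mul_assoc (diagonal _), canonG_transpose, Matrix.mul_smul, Matrix.smul_mul,
    diagonal_mul_canonG_mul_diagonal, Matrix.mul_smul, Matrix.mul_smul, trace_smul, trace_smul,
    trace_canonG_mul_canonG]
  split_ifs with h
  · subst h
    simp
  · simp

theorem crossCov_schmidt (hpos : ∀ j, 0 ≤ lam j) :
    crossCov d (pureState (diagEmbed fun j => (√(lam j) : ℂ)))
      = diagonal canonSign * (diagonal (fun μ => √(lam μ.1) * √(lam μ.2))
          - vecMulVec (diagEmbed lam) (diagEmbed lam)) := by
  ext μ ν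
  simp only [crossCov, of_apply, expval_schmidt_kronecker, expval_schmidt_kronecker_one hpos,
    expval_schmidt_one_kronecker hpos, diagonal_mul, Matrix.sub_apply, diagonal_apply,
    vecMulVec_apply, mul_sub, ← mul_assoc, canonSign_mul_diagEmbed]
  split_ifs <;> simp_all [mul_assoc]

theorem traceNorm_crossCov_schmidt (hpos : ∀ j, 0 ≤ lam j) (hsum : ∑ j, lam j = 1) :
    traceNorm (crossCov d (pureState (diagEmbed fun j => (√(lam j) : ℂ))))
      = (∑ j, √(lam j)) ^ 2 - ∑ j, lam j ^ 2 := by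
  have hsign : (diagonal canonSign)ᴴ * diagonal (canonSign (d := d)) = 1 := by
    simp [diagonal_mul_diagonal, canonSign_mul_self]
  have hnonneg : ∀ μ : Fin d × Fin d, 0 ≤ diagEmbed lam μ := fun μ => by
    unfold diagEmbed
    split_ifs <;> simp [hpos]
  have hle : ∀ μ : Fin d × Fin d, diagEmbed lam μ ≤ √(lam μ.1) * √(lam μ.2) := by
    rintro ⟨j, k⟩
    unfold diagEmbed
    split_ifs with h
    · obtain rfl : j = k := h
      simp [Real.mul_self_sqrt (hpos j)]
    · positivity
  have hA := posSemidef_diagonal_sub_vecMulVec_of_le hnonneg hle (by rw [sum_diagEmbed, hsum])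
  rw [crossCov_schmidt hpos, traceNorm_mul_eq_trace_of_posSemidef hsign hA, trace_sub,
    trace_diagonal, trace_vecMulVec]
  simp [Fintype.sum_prod_type, diagEmbed, dotProduct, ← Finset.sum_mul_sum, sq]

theorem purity_redA_schmidt (hpos : ∀ j, 0 ≤ lam j) :
    purity (redA d (pureState (diagEmbed fun j => (√(lam j) : ℂ)))) = ∑ j, lam j ^ 2 := by
  rw [purity, redA_pureState_diagEmbed, diagonal_sqrt_mul_diagonal_star hpos,
    diagonal_mul_diagonal, trace_diagonal]
  simp [sq]

end SchmidtState

/-- For |ψ⟩ = Σ_j √λ_j |jj⟩, the cross-covariance block satisfies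
tr|X_ψ| = (Σ_j √λ_j)² - Σ_j λ_j²; moreover tr(ρ_a²) = Σ_j λ_j², and if λ has at most r
nonzero entries then tr|X_ψ| ≤ r - tr(ρ_a²). -/
theorem cross_covariance_traceNorm_of_schmidt_form_state
    (d r : ℕ) (lam : Fin d → ℝ) (hpos : ∀ j, 0 ≤ lam j) (hsum : ∑ j, lam j = 1)
    (ψ : Fin d × Fin d → ℂ)
    (hψ : ψ = fun p => if p.1 = p.2 then (Real.sqrt (lam p.1) : ℂ) else 0) :
    traceNorm (crossCov d (pureState ψ)) = (∑ j, Real.sqrt (lam j)) ^ 2 - ∑ j, (lam j) ^ 2 ∧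
    purity (redA d (pureState ψ)) = ∑ j, (lam j) ^ 2 ∧
    ((Finset.univ.filter fun j => lam j ≠ 0).card ≤ r →
      traceNorm (crossCov d (pureState ψ)) ≤ r - purity (redA d (pureState ψ))) := by
  obtain rfl : ψ = diagEmbed fun j => (√(lam j) : ℂ) := hψ
  have hX := traceNorm_crossCov_schmidt hpos hsum
  have hP := purity_redA_schmidt hpos
  refine ⟨hX, hP, fun hr => ?_⟩
  rw [hX, hP, sub_le_sub_iff_right]
  calc (∑ j, √(lam j)) ^ 2 ≤ #{j | lam j ≠ 0} * ∑ j, lam j :=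
        sq_sum_sqrt_le_card_mul_sum _ fun j _ => hpos j
    _ ≤ r := by
        rw [hsum, mul_one]
        exact_mod_cast hr
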